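/- arXiv:1603.05324 — 5 statements merged into one kernel-verified Lean document; each statement's English description precedes it below -/
import Mathlib

section
/- Let (Ω, F, P) be a probability space, let x : Ω → ℝ^k be a bounded measurable random vector, and let u : Ω → ℝ^{d_j}, v : Ω → ℝ^{d_s}, w : Ω → ℝ^{d_t} be bounded measurable random vectors that are mutually conditionally independent given the σ-algebra σ(x) generated by x. Suppose E[u ∣ σ(x)] = Φ_j x, E[v ∣ σ(x)] = Φ_s x, and E[w ∣ σ(x)] = Φ_t x almost surely, for fixed matrices Φ_j ∈ ℝ^{d_j × k}, Φ_s ∈ ℝ^{d_s × k}, Φ_t ∈ ℝ^{d_t × k}. Then the third cross moment tensor satisfies, entrywise for all a, b, c: E[u_a v_b w_c] = Σ_{h_1=1}^k Σ_{h_2=1}^k Σ_{h_3=1}^k (Φ_j)_{a h_1} (Φ_s)_{b h_2} (Φ_t)_{c h_3} E[x_{h_1} x_{h_2} x_{h_3}]. -/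
open MeasureTheory

/-- Integrability of a bounded measurable real function on a finite measure space. -/
lemma integrable_of_bdd {Ω : Type*} [MeasurableSpace Ω] {μ : Measure Ω}
    [IsFiniteMeasure μ] {f : Ω → ℝ} (hf : Measurable f) {C : ℝ}
    (hC : ∀ ω, |f ω| ≤ C) : Integrable f μ :=
  ⟨hf.aestronglyMeasurable,
    HasFiniteIntegral.of_bounded (C := C) (ae_of_all μ fun ω => hC ω)⟩

/-- Expanding a product of three sums into a triple sum. -/
lemma triple_sum_expand (k : ℕ) (A B C : Fin k → ℝ) :
    (∑ h, A h) * (∑ h, B h) * (∑ h, C h)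
    = ∑ h₁ : Fin k, ∑ h₂ : Fin k, ∑ h₃ : Fin k, A h₁ * B h₂ * C h₃ := by
  rw [mul_assoc, Finset.sum_mul]
  refine Finset.sum_congr rfl fun h₁ _ => ?_
  rw [Finset.sum_mul, Finset.mul_sum]
  refine Finset.sum_congr rfl fun h₂ _ => ?_
  rw [Finset.mul_sum, Finset.mul_sum]
  exact Finset.sum_congr rfl fun h₃ _ => by ring

/-- Third cross moment under mutual conditional independence and linear conditional means:
`E[u_a v_b w_c] = Σ_{h₁,h₂,h₃} (Φ_j)_{a h₁} (Φ_s)_{b h₂} (Φ_t)_{c h₃} E[x_{h₁} x_{h₂} x_{h₃}]`. -/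
theorem cross_third_moment
    {Ω : Type*} [MeasurableSpace Ω] (μ : Measure Ω) [IsProbabilityMeasure μ]
    (k dj ds dt : ℕ) (x : Ω → Fin k → ℝ)
    (u : Ω → Fin dj → ℝ) (v : Ω → Fin ds → ℝ) (w : Ω → Fin dt → ℝ)
    (hx : Measurable x) (hu : Measurable u) (hv : Measurable v) (hw : Measurable w)
    (hxb : ∃ C, ∀ ω h, |x ω h| ≤ C)
    (hub : ∃ C, ∀ ω a, |u ω a| ≤ C)
    (hvb : ∃ C, ∀ ω b, |v ω b| ≤ C)
    (hwb : ∃ C, ∀ ω c, |w ω c| ≤ C)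
    (Φj : Matrix (Fin dj) (Fin k) ℝ) (Φs : Matrix (Fin ds) (Fin k) ℝ)
    (Φt : Matrix (Fin dt) (Fin k) ℝ)
    -- mutual conditional independence of `u`, `v`, `w` given `σ(x)`
    (hCI : ∀ (f : (Fin dj → ℝ) → ℝ) (g : (Fin ds → ℝ) → ℝ) (e : (Fin dt → ℝ) → ℝ),
      Measurable f → Measurable g → Measurable e →
      (∃ C, ∀ z, |f z| ≤ C) → (∃ C, ∀ z, |g z| ≤ C) → (∃ C, ∀ z, |e z| ≤ C) →
      μ[fun ω => f (u ω) * g (v ω) * e (w ω) | (MeasurableSpace.comap x inferInstance)]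
        =ᵐ[μ] fun ω =>
          ((μ[fun ω' => f (u ω') | (MeasurableSpace.comap x inferInstance)]) ω) *
          ((μ[fun ω' => g (v ω') | (MeasurableSpace.comap x inferInstance)]) ω) *
          ((μ[fun ω' => e (w ω') | (MeasurableSpace.comap x inferInstance)]) ω))
    -- conditional means: `E[u ∣ σ(x)] = Φ_j x`, etc., a.s.
    (hu_mean : ∀ a, μ[fun ω => u ω a | (MeasurableSpace.comap x inferInstance)]
        =ᵐ[μ] fun ω => ∑ h, Φj a h * x ω h)
    (hv_mean : ∀ b, μ[fun ω => v ω b | (MeasurableSpace.comap x inferInstance)]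
        =ᵐ[μ] fun ω => ∑ h, Φs b h * x ω h)
    (hw_mean : ∀ c, μ[fun ω => w ω c | (MeasurableSpace.comap x inferInstance)]
        =ᵐ[μ] fun ω => ∑ h, Φt c h * x ω h) :
    ∀ a b c, ∫ ω, u ω a * v ω b * w ω c ∂μ =
      ∑ h₁ : Fin k, ∑ h₂ : Fin k, ∑ h₃ : Fin k,
        Φj a h₁ * Φs b h₂ * Φt c h₃ * ∫ ω, x ω h₁ * x ω h₂ * x ω h₃ ∂μ := by
  intro a b c
  have hm : MeasurableSpace.comap x inferInstance ≤ ‹MeasurableSpace Ω› :=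
    measurable_iff_comap_le.mp hx
  obtain ⟨Cu, hCu⟩ := hub
  obtain ⟨Cv, hCv⟩ := hvb
  obtain ⟨Cw, hCw⟩ := hwb
  obtain ⟨Cx, hCx⟩ := hxb
  -- truncation functions agreeing with coordinate evaluation on the ranges
  set f : (Fin dj → ℝ) → ℝ := fun z => max (-|Cu|) (min (|Cu|) (z a)) with hf_def
  set g : (Fin ds → ℝ) → ℝ := fun z => max (-|Cv|) (min (|Cv|) (z b)) with hg_def
  set e : (Fin dt → ℝ) → ℝ := fun z => max (-|Cw|) (min (|Cw|) (z c)) with he_def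
  have hfu : ∀ ω, f (u ω) = u ω a := by
    intro ω
    have h := abs_le.mp ((hCu ω a).trans (le_abs_self Cu))
    simp [hf_def, min_eq_right h.2, max_eq_right h.1]
  have hgv : ∀ ω, g (v ω) = v ω b := by
    intro ω
    have h := abs_le.mp ((hCv ω b).trans (le_abs_self Cv))
    simp [hg_def, min_eq_right h.2, max_eq_right h.1]
  have hew : ∀ ω, e (w ω) = w ω c := by
    intro ω
    have h := abs_le.mp ((hCw ω c).trans (le_abs_self Cw))
    simp [he_def, min_eq_right h.2, max_eq_right h.1]
  have hfm : Measurable f := by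
    exact measurable_const.max ((measurable_const.min (measurable_pi_apply a)))
  have hgm : Measurable g := by
    exact measurable_const.max ((measurable_const.min (measurable_pi_apply b)))
  have hem : Measurable e := by
    exact measurable_const.max ((measurable_const.min (measurable_pi_apply c)))
  have hbnd : ∀ (C : ℝ) (t : ℝ), |max (-|C|) (min (|C|) t)| ≤ |C| := by
    intro C t
    rw [abs_le]
    constructor
    · exact le_max_left _ _
    · exact max_le (by linarith [abs_nonneg C]) ((min_le_left _ _))
  have hfb : ∃ C, ∀ z, |f z| ≤ C := ⟨|Cu|, fun z => hbnd Cu (z a)⟩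
  have hgb : ∃ C, ∀ z, |g z| ≤ C := ⟨|Cv|, fun z => hbnd Cv (z b)⟩
  have heb : ∃ C, ∀ z, |e z| ≤ C := ⟨|Cw|, fun z => hbnd Cw (z c)⟩
  have hci := hCI f g e hfm hgm hem hfb hgb heb
  -- rewrite the truncated compositions back to the coordinates
  have hfun : (fun ω => f (u ω) * g (v ω) * e (w ω)) = fun ω => u ω a * v ω b * w ω c := by
    funext ω; rw [hfu, hgv, hew]
  have hfu' : (fun ω' => f (u ω')) = fun ω' => u ω' a := funext hfu
  have hgv' : (fun ω' => g (v ω')) = fun ω' => v ω' b := funext hgv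
  have hew' : (fun ω' => e (w ω')) = fun ω' => w ω' c := funext hew
  rw [hfun, hfu', hgv', hew'] at hci
  -- combine with the conditional means
  have hprod : μ[fun ω => u ω a * v ω b * w ω c | MeasurableSpace.comap x inferInstance] =ᵐ[μ]
      fun ω => (∑ h, Φj a h * x ω h) * (∑ h, Φs b h * x ω h) * (∑ h, Φt c h * x ω h) := by
    filter_upwards [hci, hu_mean a, hv_mean b, hw_mean c] with ω h1 h2 h3 h4
    rw [h1, h2, h3, h4]
  have step1 : ∫ ω, u ω a * v ω b * w ω c ∂μ
      = ∫ ω, (μ[fun ω => u ω a * v ω b * w ω c | MeasurableSpace.comap x inferInstance]) ω ∂μ :=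
    (integral_condExp hm).symm
  have step2 : ∫ ω, (μ[fun ω => u ω a * v ω b * w ω c | MeasurableSpace.comap x inferInstance]) ω ∂μ
      = ∫ ω, (∑ h, Φj a h * x ω h) * (∑ h, Φs b h * x ω h) * (∑ h, Φt c h * x ω h) ∂μ :=
    integral_congr_ae hprod
  rw [step1, step2]
  have hexp : ∀ ω : Ω,
      (∑ h, Φj a h * x ω h) * (∑ h, Φs b h * x ω h) * (∑ h, Φt c h * x ω h)
      = ∑ h₁ : Fin k, ∑ h₂ : Fin k, ∑ h₃ : Fin k,
          Φj a h₁ * Φs b h₂ * Φt c h₃ * (x ω h₁ * x ω h₂ * x ω h₃) := by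
    intro ω
    rw [triple_sum_expand]
    exact Finset.sum_congr rfl fun h₁ _ => Finset.sum_congr rfl fun h₂ _ =>
      Finset.sum_congr rfl fun h₃ _ => by ring
  simp_rw [hexp]
  have hint : ∀ h₁ h₂ h₃ : Fin k,
      Integrable (fun ω => x ω h₁ * x ω h₂ * x ω h₃) μ := by
    intro h₁ h₂ h₃
    refine integrable_of_bdd (((hx.eval).mul (hx.eval)).mul (hx.eval))
      (C := |Cx| * |Cx| * |Cx|) fun ω => ?_
    have hb : ∀ h, |x ω h| ≤ |Cx| := fun h => (hCx ω h).trans (le_abs_self Cx)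
    calc |x ω h₁ * x ω h₂ * x ω h₃| = |x ω h₁| * |x ω h₂| * |x ω h₃| := by
          rw [abs_mul, abs_mul]
      _ ≤ |Cx| * |Cx| * |Cx| := by
          exact mul_le_mul (mul_le_mul (hb h₁) (hb h₂) (abs_nonneg _)
            (abs_nonneg _)) (hb h₃) (abs_nonneg _)
            (mul_nonneg (abs_nonneg _) (abs_nonneg _))
  rw [integral_finset_sum _ fun h₁ _ => by
    exact integrable_finset_sum _ fun h₂ _ => integrable_finset_sum _ fun h₃ _ =>
      ((hint h₁ h₂ h₃).const_mul _)]
  refine Finset.sum_congr rfl fun h₁ _ => ?_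
  rw [integral_finset_sum _ fun h₂ _ => integrable_finset_sum _ fun h₃ _ =>
    ((hint h₁ h₂ h₃).const_mul _)]
  refine Finset.sum_congr rfl fun h₂ _ => ?_
  rw [integral_finset_sum _ fun h₃ _ => ((hint h₁ h₂ h₃).const_mul _)]
  refine Finset.sum_congr rfl fun h₃ _ => ?_
  exact integral_const_mul _ _
end

section
/- (Third-order moment condition of MELD, Theorem 1.) Let (Ω, F, P) be a probability space and α ∈ ℝ^k with α_h > 0 for all h and α_0 = Σ_h α_h. Let x : Ω → ℝ^k be a bounded measurable random vector whose moments up to order three satisfy the Dirichlet formulas: E[x_g] = α_g/α_0, E[x_g x_h] = (α_g α_h + δ_{gh} α_g)/(α_0(α_0+1)), and E[x_g x_h x_l] = (α_g α_h α_l + δ_{gh} α_g α_l + δ_{gl} α_g α_h + δ_{hl} α_h α_g + 2 δ_{gh} δ_{gl} α_g)/(α_0(α_0+1)(α_0+2)). Let u : Ω → ℝ^{d_j}, v : Ω → ℝ^{d_s}, w : Ω → ℝ^{d_t} be bounded measurable random vectors, mutually conditionally independent given σ(x), with E[u ∣ σ(x)] = Φ_j x, E[v ∣ σ(x)] = Φ_s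 x, E[w ∣ σ(x)] = Φ_t x almost surely. Define μ_j = (1/α_0) Φ_j α (similarly μ_s, μ_t), write φ_{jh} for the h-th column of Φ_j, and let λ^(3)_h = 2 α_h/(α_0(α_0+1)(α_0+2)). Then, entrywise for all a, b, c: E[u_a v_b w_c] − (α_0/(α_0+2)) ( E[u_a v_b] (μ_t)_c + (μ_j)_a E[v_b w_c] + E[u_a w_c] (μ_s)_b ) + (2 α_0^2/((α_0+1)(α_0+2))) (μ_j)_a (μ_s)_b (μ_t)_c − Σ_{h=1}^k λ^(3)_h (φ_{jh})_a (φ_{sh})_b (φ_{th})_c = 0. -/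
open MeasureTheory

/-!
Conditioning on `σ(x)` and using the mutual conditional independence together with the
conditional means, `E[u_a v_b w_c] = E[(Φ_j x)_a (Φ_s x)_b (Φ_t x)_c]`, and likewise for the
pairwise moments. The left-hand side is therefore the contraction, against the rows of
`Φ_j, Φ_s, Φ_t`, of the tensor `M₃ - α₀/(α₀+2) · sym(M₂ ⊗ m) + 2α₀²/((α₀+1)(α₀+2)) · m ⊗ m ⊗ m`
built from the Dirichlet moments `M₂, M₃` and the mean `m = α/α₀`. Entrywise this tensor is a
rational function of `α_g, α_h, α_l, α₀` which equals `λ⁽³⁾_g` on the diagonal `g = h = l` and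
vanishes off it.
-/

theorem Finset.sum_trilinear_combination {ι R : Type*} [CommRing R] (s : Finset ι)
    (A B C m : ι → R) (M₂ : ι → ι → R) (M₃ : ι → ι → ι → R) (c₁ c₂ : R) :
    (∑ g ∈ s, ∑ h ∈ s, ∑ l ∈ s, A g * B h * C l * M₃ g h l) -
        c₁ * ((∑ g ∈ s, ∑ h ∈ s, A g * B h * M₂ g h) * (∑ l ∈ s, C l * m l) +
          (∑ g ∈ s, A g * m g) * (∑ h ∈ s, ∑ l ∈ s, B h * C l * M₂ h l) +
          (∑ g ∈ s, ∑ l ∈ s, A g * C l * M₂ g l) * (∑ h ∈ s, B h * m h)) +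
        c₂ * ((∑ g ∈ s, A g * m g) * (∑ h ∈ s, B h * m h) * (∑ l ∈ s, C l * m l)) =
      ∑ g ∈ s, ∑ h ∈ s, ∑ l ∈ s, A g * B h * C l *
        (M₃ g h l - c₁ * (M₂ g h * m l + m g * M₂ h l + M₂ g l * m h) +
          c₂ * (m g * m h * m l)) := by
  have e₁ : (∑ g ∈ s, ∑ h ∈ s, A g * B h * M₂ g h) * (∑ l ∈ s, C l * m l) =
      ∑ g ∈ s, ∑ h ∈ s, ∑ l ∈ s, A g * B h * C l * (M₂ g h * m l) := by
    simp only [Finset.sum_mul]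
    simp only [Finset.mul_sum]
    simp only [mul_comm, mul_left_comm]
  have e₂ : (∑ g ∈ s, A g * m g) * (∑ h ∈ s, ∑ l ∈ s, B h * C l * M₂ h l) =
      ∑ g ∈ s, ∑ h ∈ s, ∑ l ∈ s, A g * B h * C l * (m g * M₂ h l) := by
    simp only [Finset.sum_mul]
    simp only [Finset.mul_sum]
    simp only [mul_comm, mul_left_comm]
  have e₃ : (∑ g ∈ s, ∑ l ∈ s, A g * C l * M₂ g l) * (∑ h ∈ s, B h * m h) =
      ∑ g ∈ s, ∑ h ∈ s, ∑ l ∈ s, A g * B h * C l * (M₂ g l * m h) := by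
    simp only [Finset.sum_mul]
    simp only [Finset.mul_sum]
    refine Finset.sum_congr rfl fun g _ => ?_
    rw [Finset.sum_comm]
    simp only [mul_comm, mul_left_comm]
  have e₄ : (∑ g ∈ s, A g * m g) * (∑ h ∈ s, B h * m h) * (∑ l ∈ s, C l * m l) =
      ∑ g ∈ s, ∑ h ∈ s, ∑ l ∈ s, A g * B h * C l * (m g * m h * m l) := by
    rw [Finset.sum_mul_sum, Finset.sum_mul]
    simp only [Finset.sum_mul_sum]
    simp only [mul_comm, mul_left_comm]
  rw [e₁, e₂, e₃, e₄]
  simp only [Finset.mul_sum, ← Finset.sum_add_distrib, ← Finset.sum_sub_distrib]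
  refine Finset.sum_congr rfl fun g _ => Finset.sum_congr rfl fun h _ =>
    Finset.sum_congr rfl fun l _ => ?_
  ring

section Dirichlet

variable {ι : Type*} [Fintype ι] [DecidableEq ι]

noncomputable def dirichletMoment2 (α : ι → ℝ) (g h : ι) : ℝ :=
  (α g * α h + (if g = h then α g else 0)) / ((∑ i, α i) * ((∑ i, α i) + 1))

noncomputable def dirichletMoment3 (α : ι → ℝ) (g h l : ι) : ℝ :=
  (α g * α h * α l + (if g = h then α g * α l else 0) +
      (if g = l then α g * α h else 0) + (if h = l then α h * α g else 0) +
      (if g = h then 1 else 0) * (if g = l then 1 else 0) * (2 * α g)) /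
    ((∑ i, α i) * ((∑ i, α i) + 1) * ((∑ i, α i) + 2))

theorem dirichletMoment3_sub_sym_add_mean_cube (α : ι → ℝ) (h₀ : ∑ i, α i ≠ 0)
    (h₁ : ∑ i, α i + 1 ≠ 0) (h₂ : ∑ i, α i + 2 ≠ 0) (g h l : ι) :
    dirichletMoment3 α g h l -
        (∑ i, α i) / (∑ i, α i + 2) *
          (dirichletMoment2 α g h * (α l / ∑ i, α i) + α g / (∑ i, α i) * dirichletMoment2 α h l +
            dirichletMoment2 α g l * (α h / ∑ i, α i)) +
        2 * (∑ i, α i) ^ 2 / ((∑ i, α i + 1) * (∑ i, α i + 2)) *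
          (α g / (∑ i, α i) * (α h / ∑ i, α i) * (α l / ∑ i, α i)) =
      if g = h then if g = l then 2 * α g / ((∑ i, α i) * (∑ i, α i + 1) * (∑ i, α i + 2))
        else 0 else 0 := by
  unfold dirichletMoment2 dirichletMoment3
  generalize ∑ i, α i = s at *
  split_ifs <;> subst_vars <;> first | (exfalso; tauto) | (field_simp; ring)

theorem dirichlet_third_moment_condition (α : ι → ℝ) (hα : ∀ i, 0 < α i) (A B C : ι → ℝ) :
    (∑ g, ∑ h, ∑ l, A g * B h * C l * dirichletMoment3 α g h l) -
        ((∑ i, α i) / ((∑ i, α i) + 2)) *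
          ((∑ g, ∑ h, A g * B h * dirichletMoment2 α g h) *
              (((1 : ℝ) / (∑ i, α i)) * ∑ h, C h * α h) +
            (((1 : ℝ) / (∑ i, α i)) * ∑ h, A h * α h) *
              (∑ g, ∑ h, B g * C h * dirichletMoment2 α g h) +
            (∑ g, ∑ h, A g * C h * dirichletMoment2 α g h) *
              (((1 : ℝ) / (∑ i, α i)) * ∑ h, B h * α h)) +
        (2 * (∑ i, α i) ^ 2 / (((∑ i, α i) + 1) * ((∑ i, α i) + 2))) *
          ((((1 : ℝ) / (∑ i, α i)) * ∑ h, A h * α h) *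
            (((1 : ℝ) / (∑ i, α i)) * ∑ h, B h * α h) *
            (((1 : ℝ) / (∑ i, α i)) * ∑ h, C h * α h)) -
        (∑ h, (2 * α h / ((∑ i, α i) * ((∑ i, α i) + 1) * ((∑ i, α i) + 2))) *
          (A h * B h * C h)) = 0 := by
  have hmean : ∀ D : ι → ℝ, 1 / (∑ i, α i) * ∑ h, D h * α h = ∑ h, D h * (α h / ∑ i, α i) :=
    fun D => by rw [Finset.mul_sum]; exact Finset.sum_congr rfl fun h _ => by ring
  have hdiag : ∀ w : ι → ℝ, ∑ h, w h * (A h * B h * C h) =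
      ∑ g, ∑ h, ∑ l, A g * B h * C l * (if g = h then if g = l then w g else 0 else 0) :=
    fun w => by simp [mul_ite, Finset.sum_ite_eq, mul_comm]
  rw [sub_eq_zero, hmean, hmean, hmean, Finset.sum_trilinear_combination, hdiag]
  refine Finset.sum_congr rfl fun g _ => Finset.sum_congr rfl fun h _ =>
    Finset.sum_congr rfl fun l _ => ?_
  have hs : 0 < ∑ i, α i := Finset.sum_pos (fun i _ => hα i) ⟨g, Finset.mem_univ g⟩
  rw [dirichletMoment3_sub_sym_add_mean_cube α hs.ne' (by positivity) (by positivity)]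

end Dirichlet

section Expansion

variable {Ω ι : Type*} [MeasurableSpace Ω] {μ : Measure Ω} {x : Ω → ι → ℝ}

theorem memLp_top_apply (hx : Measurable x) (hxb : ∃ C, ∀ ω i, |x ω i| ≤ C) (i : ι) :
    MemLp (fun ω => x ω i) ⊤ μ := by
  obtain ⟨C, hC⟩ := hxb
  exact memLp_top_of_bound ((measurable_pi_apply i).comp hx).aestronglyMeasurable C
    (ae_of_all _ fun ω => hC ω i)

variable [IsFiniteMeasure μ] [Fintype ι]

theorem integral_sum_mul_sum_mul_sum (hx : ∀ i, MemLp (fun ω => x ω i) ⊤ μ) (A B C : ι → ℝ) :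
    ∫ ω, (∑ g, A g * x ω g) * (∑ h, B h * x ω h) * (∑ l, C l * x ω l) ∂μ =
      ∑ g, ∑ h, ∑ l, A g * B h * C l * ∫ ω, x ω g * x ω h * x ω l ∂μ := by
  have hint : ∀ g h l, Integrable (fun ω => x ω g * x ω h * x ω l) μ := fun g h l =>
    ((hx l).mul' ((hx h).mul' (hx g) (r := ⊤)) (r := ⊤)).integrable le_top
  have hexpand : ∀ ω, (∑ g, A g * x ω g) * (∑ h, B h * x ω h) * (∑ l, C l * x ω l) =
      ∑ g, ∑ h, ∑ l, A g * B h * C l * (x ω g * x ω h * x ω l) := fun ω => by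
    rw [Finset.sum_mul_sum, Finset.sum_mul]
    refine Finset.sum_congr rfl fun g _ => ?_
    rw [Finset.sum_mul_sum]
    refine Finset.sum_congr rfl fun h _ => Finset.sum_congr rfl fun l _ => ?_
    ring
  simp only [hexpand]
  rw [integral_finsetSum _ fun g _ => integrable_finsetSum _ fun h _ =>
    integrable_finsetSum _ fun l _ => (hint g h l).const_mul _]
  refine Finset.sum_congr rfl fun g _ => ?_
  rw [integral_finsetSum _ fun h _ => integrable_finsetSum _ fun l _ => (hint g h l).const_mul _]
  refine Finset.sum_congr rfl fun h _ => ?_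
  rw [integral_finsetSum _ fun l _ => (hint g h l).const_mul _]
  exact Finset.sum_congr rfl fun l _ => integral_const_mul _ _

theorem integral_sum_mul_sum (hx : ∀ i, MemLp (fun ω => x ω i) ⊤ μ) (A B : ι → ℝ) :
    ∫ ω, (∑ g, A g * x ω g) * (∑ h, B h * x ω h) ∂μ =
      ∑ g, ∑ h, A g * B h * ∫ ω, x ω g * x ω h ∂μ := by
  have hint : ∀ g h, Integrable (fun ω => x ω g * x ω h) μ := fun g h =>
    ((hx h).mul' (hx g) (r := ⊤)).integrable le_top
  have hexpand : ∀ ω, (∑ g, A g * x ω g) * (∑ h, B h * x ω h) =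
      ∑ g, ∑ h, A g * B h * (x ω g * x ω h) := fun ω => by
    simp only [Finset.sum_mul_sum]
    refine Finset.sum_congr rfl fun g _ => Finset.sum_congr rfl fun h _ => ?_
    ring
  simp only [hexpand]
  rw [integral_finsetSum _ fun g _ => integrable_finsetSum _ fun h _ => (hint g h).const_mul _]
  refine Finset.sum_congr rfl fun g _ => ?_
  rw [integral_finsetSum _ fun h _ => (hint g h).const_mul _]
  exact Finset.sum_congr rfl fun h _ => integral_const_mul _ _

end Expansion

section CondIndep

variable {Ω E₁ E₂ E₃ : Type*} {m m₀ : MeasurableSpace Ω} {μ : Measure[m₀] Ω}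
  [MeasurableSpace E₁] [MeasurableSpace E₂] [MeasurableSpace E₃]

def IsBoundedFunctionOf {E : Type*} [MeasurableSpace E] (U : Ω → ℝ) (u : Ω → E) : Prop :=
  ∃ f : E → ℝ, Measurable f ∧ (∃ C, ∀ z, |f z| ≤ C) ∧ U = fun ω => f (u ω)

theorem isBoundedFunctionOf_const {E : Type*} [MeasurableSpace E] (u : Ω → E) (c : ℝ) :
    IsBoundedFunctionOf (fun _ => c) u :=
  ⟨fun _ => c, measurable_const, ⟨|c|, fun _ => le_rfl⟩, rfl⟩

theorem isBoundedFunctionOf_apply {ι : Type*} {u : Ω → ι → ℝ}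
    (hu : ∃ C, ∀ ω i, |u ω i| ≤ C) (i : ι) : IsBoundedFunctionOf (fun ω => u ω i) u := by
  obtain ⟨C, hC⟩ := hu
  refine ⟨fun z => max (-|C|) (min |C| (z i)),
    measurable_const.max (measurable_const.min (measurable_pi_apply i)), ⟨|C|, fun z => ?_⟩,
    funext fun ω => ?_⟩
  · exact abs_le.2 ⟨le_max_left _ _, max_le (neg_le_self (abs_nonneg C)) (min_le_left _ _)⟩
  · have hω := abs_le.1 ((hC ω i).trans (le_abs_self C))
    simp only [min_eq_right hω.2, max_eq_right hω.1]

def MutuallyCondIndep (m : MeasurableSpace Ω) (μ : Measure[m₀] Ω) (u : Ω → E₁) (v : Ω → E₂)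
    (w : Ω → E₃) : Prop :=
  ∀ (f : E₁ → ℝ) (g : E₂ → ℝ) (e : E₃ → ℝ), Measurable f → Measurable g → Measurable e →
    (∃ C, ∀ z, |f z| ≤ C) → (∃ C, ∀ z, |g z| ≤ C) → (∃ C, ∀ z, |e z| ≤ C) →
    μ[fun ω => f (u ω) * g (v ω) * e (w ω) | m] =ᵐ[μ]
      fun ω => μ[fun ω' => f (u ω') | m] ω * μ[fun ω' => g (v ω') | m] ω *
        μ[fun ω' => e (w ω') | m] ω

theorem MutuallyCondIndep.integral_mul_mul [IsFiniteMeasure μ] {u : Ω → E₁} {v : Ω → E₂}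
    {w : Ω → E₃} (hind : MutuallyCondIndep m μ u v w) (hm : m ≤ m₀) {U V W F G H : Ω → ℝ}
    (hU : IsBoundedFunctionOf U u) (hV : IsBoundedFunctionOf V v) (hW : IsBoundedFunctionOf W w)
    (hF : μ[U | m] =ᵐ[μ] F) (hG : μ[V | m] =ᵐ[μ] G) (hH : μ[W | m] =ᵐ[μ] H) :
    ∫ ω, U ω * V ω * W ω ∂μ = ∫ ω, F ω * G ω * H ω ∂μ := by
  obtain ⟨f, hf, hfC, rfl⟩ := hU
  obtain ⟨g, hg, hgC, rfl⟩ := hV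
  obtain ⟨e, he, heC, rfl⟩ := hW
  calc ∫ ω, f (u ω) * g (v ω) * e (w ω) ∂μ
      = ∫ ω, μ[fun ω => f (u ω) * g (v ω) * e (w ω) | m] ω ∂μ := (integral_condExp hm).symm
    _ = ∫ ω, F ω * G ω * H ω ∂μ := integral_congr_ae <| by
      filter_upwards [hind f g e hf hg he hfC hgC heC, hF, hG, hH] with ω h hFω hGω hHω
      rw [h, hFω, hGω, hHω]

end CondIndep

theorem meld_third_moment_condition_general
    {Ω : Type*} [MeasurableSpace Ω] (μ : Measure Ω) [IsProbabilityMeasure μ]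
    (k dj ds dt : ℕ) (α : Fin k → ℝ) (hα : ∀ h, 0 < α h)
    (x : Ω → Fin k → ℝ)
    (u : Ω → Fin dj → ℝ) (v : Ω → Fin ds → ℝ) (w : Ω → Fin dt → ℝ)
    (hx : Measurable x)
    (hxb : ∃ C, ∀ ω h, |x ω h| ≤ C)
    (hub : ∃ C, ∀ ω a, |u ω a| ≤ C)
    (hvb : ∃ C, ∀ ω b, |v ω b| ≤ C)
    (hwb : ∃ C, ∀ ω c, |w ω c| ≤ C)
    -- Dirichlet moment formulas for `x` up to order three
    (hx2 : ∀ g h, ∫ ω, x ω g * x ω h ∂μ =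
      (α g * α h + (if g = h then α g else 0)) / ((∑ i, α i) * ((∑ i, α i) + 1)))
    (hx3 : ∀ g h l, ∫ ω, x ω g * x ω h * x ω l ∂μ =
      (α g * α h * α l + (if g = h then α g * α l else 0) +
          (if g = l then α g * α h else 0) + (if h = l then α h * α g else 0) +
          (if g = h then 1 else 0) * (if g = l then 1 else 0) * (2 * α g)) /
        ((∑ i, α i) * ((∑ i, α i) + 1) * ((∑ i, α i) + 2)))
    (Φj : Matrix (Fin dj) (Fin k) ℝ) (Φs : Matrix (Fin ds) (Fin k) ℝ)
    (Φt : Matrix (Fin dt) (Fin k) ℝ)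
    -- mutual conditional independence of `u`, `v`, `w` given `σ(x)`
    (hCI : ∀ (f : (Fin dj → ℝ) → ℝ) (g : (Fin ds → ℝ) → ℝ) (e : (Fin dt → ℝ) → ℝ),
      Measurable f → Measurable g → Measurable e →
      (∃ C, ∀ z, |f z| ≤ C) → (∃ C, ∀ z, |g z| ≤ C) → (∃ C, ∀ z, |e z| ≤ C) →
      μ[fun ω => f (u ω) * g (v ω) * e (w ω) | (MeasurableSpace.comap x inferInstance)]
        =ᵐ[μ] fun ω =>
          ((μ[fun ω' => f (u ω') | (MeasurableSpace.comap x inferInstance)]) ω) *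
          ((μ[fun ω' => g (v ω') | (MeasurableSpace.comap x inferInstance)]) ω) *
          ((μ[fun ω' => e (w ω') | (MeasurableSpace.comap x inferInstance)]) ω))
    -- conditional means: `E[u ∣ σ(x)] = Φ_j x`, etc., a.s.
    (hu_mean : ∀ a, μ[fun ω => u ω a | (MeasurableSpace.comap x inferInstance)]
        =ᵐ[μ] fun ω => ∑ h, Φj a h * x ω h)
    (hv_mean : ∀ b, μ[fun ω => v ω b | (MeasurableSpace.comap x inferInstance)]
        =ᵐ[μ] fun ω => ∑ h, Φs b h * x ω h)
    (hw_mean : ∀ c, μ[fun ω => w ω c | (MeasurableSpace.comap x inferInstance)]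
        =ᵐ[μ] fun ω => ∑ h, Φt c h * x ω h) :
    ∀ a b c,
      (∫ ω, u ω a * v ω b * w ω c ∂μ) -
        ((∑ i, α i) / ((∑ i, α i) + 2)) *
          ((∫ ω, u ω a * v ω b ∂μ) * (((1 : ℝ) / (∑ i, α i)) * ∑ h, Φt c h * α h) +
            (((1 : ℝ) / (∑ i, α i)) * ∑ h, Φj a h * α h) * (∫ ω, v ω b * w ω c ∂μ) +
            (∫ ω, u ω a * w ω c ∂μ) * (((1 : ℝ) / (∑ i, α i)) * ∑ h, Φs b h * α h)) +
        (2 * (∑ i, α i) ^ 2 / (((∑ i, α i) + 1) * ((∑ i, α i) + 2))) *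
          ((((1 : ℝ) / (∑ i, α i)) * ∑ h, Φj a h * α h) *
            (((1 : ℝ) / (∑ i, α i)) * ∑ h, Φs b h * α h) *
            (((1 : ℝ) / (∑ i, α i)) * ∑ h, Φt c h * α h)) -
        (∑ h, (2 * α h / ((∑ i, α i) * ((∑ i, α i) + 1) * ((∑ i, α i) + 2))) *
          (Φj a h * Φs b h * Φt c h)) = 0 := by
  intro a b c
  have hm : MeasurableSpace.comap x inferInstance ≤ ‹MeasurableSpace Ω› := hx.comap_le
  have hind : MutuallyCondIndep (MeasurableSpace.comap x inferInstance) μ u v w := hCI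
  have hone : μ[fun _ => (1 : ℝ) | MeasurableSpace.comap x inferInstance] =ᵐ[μ] fun _ => 1 := by
    rw [condExp_const hm]
  have hUa := isBoundedFunctionOf_apply hub a
  have hVb := isBoundedFunctionOf_apply hvb b
  have hWc := isBoundedFunctionOf_apply hwb c
  have huvw := hind.integral_mul_mul hm hUa hVb hWc (hu_mean a) (hv_mean b) (hw_mean c)
  -- the pairwise moments: take the constant `1` as the third test function
  have huv := hind.integral_mul_mul hm hUa hVb (isBoundedFunctionOf_const w 1)
    (hu_mean a) (hv_mean b) hone
  have hvw := hind.integral_mul_mul hm (isBoundedFunctionOf_const u 1) hVb hWc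
    hone (hv_mean b) (hw_mean c)
  have huw := hind.integral_mul_mul hm hUa (isBoundedFunctionOf_const v 1) hWc
    (hu_mean a) hone (hw_mean c)
  simp only [mul_one, one_mul] at huv hvw huw
  have hxLp : ∀ i, MemLp (fun ω => x ω i) ⊤ μ := memLp_top_apply hx hxb
  have hM₂ : ∀ g h, ∫ ω, x ω g * x ω h ∂μ = dirichletMoment2 α g h := hx2
  have hM₃ : ∀ g h l, ∫ ω, x ω g * x ω h * x ω l ∂μ = dirichletMoment3 α g h l := hx3
  rw [huvw, huv, hvw, huw]
  simp only [integral_sum_mul_sum_mul_sum hxLp, integral_sum_mul_sum hxLp, hM₂, hM₃]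
  exact dirichlet_third_moment_condition α hα (Φj a) (Φs b) (Φt c)

/-- Third-order moment condition of MELD (Theorem 1), entrywise. -/
theorem meld_third_moment_condition
    {Ω : Type*} [MeasurableSpace Ω] (μ : Measure Ω) [IsProbabilityMeasure μ]
    (k dj ds dt : ℕ) (α : Fin k → ℝ) (hα : ∀ h, 0 < α h)
    (x : Ω → Fin k → ℝ)
    (u : Ω → Fin dj → ℝ) (v : Ω → Fin ds → ℝ) (w : Ω → Fin dt → ℝ)
    (hx : Measurable x) (hu : Measurable u) (hv : Measurable v) (hw : Measurable w)
    (hxb : ∃ C, ∀ ω h, |x ω h| ≤ C)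
    (hub : ∃ C, ∀ ω a, |u ω a| ≤ C)
    (hvb : ∃ C, ∀ ω b, |v ω b| ≤ C)
    (hwb : ∃ C, ∀ ω c, |w ω c| ≤ C)
    -- Dirichlet moment formulas for `x` up to order three
    (hx1 : ∀ g, ∫ ω, x ω g ∂μ = α g / (∑ i, α i))
    (hx2 : ∀ g h, ∫ ω, x ω g * x ω h ∂μ =
      (α g * α h + (if g = h then α g else 0)) / ((∑ i, α i) * ((∑ i, α i) + 1)))
    (hx3 : ∀ g h l, ∫ ω, x ω g * x ω h * x ω l ∂μ =
      (α g * α h * α l + (if g = h then α g * α l else 0) +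
          (if g = l then α g * α h else 0) + (if h = l then α h * α g else 0) +
          (if g = h then 1 else 0) * (if g = l then 1 else 0) * (2 * α g)) /
        ((∑ i, α i) * ((∑ i, α i) + 1) * ((∑ i, α i) + 2)))
    (Φj : Matrix (Fin dj) (Fin k) ℝ) (Φs : Matrix (Fin ds) (Fin k) ℝ)
    (Φt : Matrix (Fin dt) (Fin k) ℝ)
    -- mutual conditional independence of `u`, `v`, `w` given `σ(x)`
    (hCI : ∀ (f : (Fin dj → ℝ) → ℝ) (g : (Fin ds → ℝ) → ℝ) (e : (Fin dt → ℝ) → ℝ),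
      Measurable f → Measurable g → Measurable e →
      (∃ C, ∀ z, |f z| ≤ C) → (∃ C, ∀ z, |g z| ≤ C) → (∃ C, ∀ z, |e z| ≤ C) →
      μ[fun ω => f (u ω) * g (v ω) * e (w ω) | (MeasurableSpace.comap x inferInstance)]
        =ᵐ[μ] fun ω =>
          ((μ[fun ω' => f (u ω') | (MeasurableSpace.comap x inferInstance)]) ω) *
          ((μ[fun ω' => g (v ω') | (MeasurableSpace.comap x inferInstance)]) ω) *
          ((μ[fun ω' => e (w ω') | (MeasurableSpace.comap x inferInstance)]) ω))
    -- conditional means: `E[u ∣ σ(x)] = Φ_j x`, etc., a.s.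
    (hu_mean : ∀ a, μ[fun ω => u ω a | (MeasurableSpace.comap x inferInstance)]
        =ᵐ[μ] fun ω => ∑ h, Φj a h * x ω h)
    (hv_mean : ∀ b, μ[fun ω => v ω b | (MeasurableSpace.comap x inferInstance)]
        =ᵐ[μ] fun ω => ∑ h, Φs b h * x ω h)
    (hw_mean : ∀ c, μ[fun ω => w ω c | (MeasurableSpace.comap x inferInstance)]
        =ᵐ[μ] fun ω => ∑ h, Φt c h * x ω h) :
    ∀ a b c,
      (∫ ω, u ω a * v ω b * w ω c ∂μ) -
        ((∑ i, α i) / ((∑ i, α i) + 2)) *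
          ((∫ ω, u ω a * v ω b ∂μ) * (((1 : ℝ) / (∑ i, α i)) * ∑ h, Φt c h * α h) +
            (((1 : ℝ) / (∑ i, α i)) * ∑ h, Φj a h * α h) * (∫ ω, v ω b * w ω c ∂μ) +
            (∫ ω, u ω a * w ω c ∂μ) * (((1 : ℝ) / (∑ i, α i)) * ∑ h, Φs b h * α h)) +
        (2 * (∑ i, α i) ^ 2 / (((∑ i, α i) + 1) * ((∑ i, α i) + 2))) *
          ((((1 : ℝ) / (∑ i, α i)) * ∑ h, Φj a h * α h) *
            (((1 : ℝ) / (∑ i, α i)) * ∑ h, Φs b h * α h) *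
            (((1 : ℝ) / (∑ i, α i)) * ∑ h, Φt c h * α h)) -
        (∑ h, (2 * α h / ((∑ i, α i) * ((∑ i, α i) + 1) * ((∑ i, α i) + 2))) *
          (Φj a h * Φs b h * Φt c h)) = 0 :=
  meld_third_moment_condition_general μ k dj ds dt α hα x u v w hx hxb hub hvb hwb hx2 hx3 Φj Φs Φt
    hCI hu_mean hv_mean hw_mean
end

section
/- (Tucker decomposition of the joint probability tensor.) Let (Ω, F, P) be a probability space, let x : Ω → ℝ^k be a measurable random vector taking values in the probability simplex Δ^{k−1} = {x ∈ ℝ^k : x_h ≥ 0, Σ_h x_h = 1}, and let y_1, …, y_p be random variables with y_j taking values in {1,…,d_j}, mutually conditionally independent given σ(x), with P(y_j = c ∣ σ(x)) = Σ_{h=1}^k x_h φ_{jhc} almost surely for each j and each c ∈ {1,…,d_j}, where for each j and h the vector (φ_{jh1},…,φ_{jhd_j}) is a probability vector. Then for every c = (c_1,…,c_p) with c_j ∈ {1,…,d_j}: P(y_1 = c_1, …, y_p = c_p) = Σ_{h_1=1}^k ⋯ Σ_{h_p=1}^k g_{h_1,…,h_p} ∏_{j=1}^p φ_{j h_j c_j},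 where g_{h_1,…,h_p} = E[ ∏_{j=1}^p x_{h_j} ]. -/
open MeasureTheory Finset

/-!
Write `P(y = c)` as the expectation of `∏_j 1{y_j = c_j}`. By the tower property this is the
expectation of its conditional expectation given `σ(x)`, which by conditional independence is
`∏_j P(y_j = c_j ∣ σ(x)) = ∏_j Σ_h x_h φ_{j h c_j}`. Expanding the product of sums over all
`h : Fin p → Fin k` and integrating term by term (the monomials `∏_j x_{h_j}` are bounded by `1`
on the simplex) gives the Tucker decomposition.
-/

section

variable {Ω : Type*} [MeasurableSpace Ω] {μ : Measure Ω} {ι κ : Type*} [Fintype ι] [Fintype κ]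

theorem measureReal_forall_eq_eq_integral_prod_ite {α : ι → Type*}
    [∀ j, MeasurableSpace (α j)] [∀ j, MeasurableSingletonClass (α j)] [∀ j, DecidableEq (α j)]
    {y : ∀ j, Ω → α j} (hy : ∀ j, Measurable (y j)) (c : ∀ j, α j) :
    μ.real {ω | ∀ j, y j ω = c j} = ∫ ω, ∏ j, (if y j ω = c j then (1 : ℝ) else 0) ∂μ := by
  have hS : MeasurableSet {ω | ∀ j, y j ω = c j} := by
    simp only [Set.ofPred_forall]
    exact MeasurableSet.iInter fun j => hy j (measurableSet_singleton (c j))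
  rw [← integral_indicator_one hS]
  congr 1 with ω
  simp [Set.indicator_apply, prod_boole]

theorem integrable_prod_apply_of_mem_stdSimplex [IsFiniteMeasure μ] {x : Ω → κ → ℝ}
    (hx : Measurable x) (hmem : ∀ ω, x ω ∈ stdSimplex ℝ κ) (h : ι → κ) :
    Integrable (fun ω => ∏ j, x ω (h j)) μ := by
  refine Integrable.of_bound (by fun_prop) 1 (ae_of_all _ fun ω => ?_)
  have hunit := fun j => mem_Icc_of_mem_stdSimplex (hmem ω) (h j)
  rw [Real.norm_of_nonneg (prod_nonneg fun j _ => (hunit j).1)]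
  exact prod_le_one (fun j _ => (hunit j).1) fun j _ => (hunit j).2

theorem prod_sum_mul_eq_sum_prod_mul_prod {R : Type*} [CommSemiring R] [DecidableEq ι]
    (a : κ → R) (b : ι → κ → R) :
    ∏ j, ∑ h, a h * b j h = ∑ h : ι → κ, (∏ j, a (h j)) * ∏ j, b j (h j) := by
  simp_rw [Fintype.prod_sum, prod_mul_distrib]

theorem integral_prod_sum_mul_eq_sum_integral_mul [DecidableEq ι] {x : Ω → κ → ℝ}
    (hint : ∀ h : ι → κ, Integrable (fun ω => ∏ j, x ω (h j)) μ) (b : ι → κ → ℝ) :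
    ∫ ω, ∏ j, ∑ h, x ω h * b j h ∂μ
      = ∑ h : ι → κ, (∫ ω, ∏ j, x ω (h j) ∂μ) * ∏ j, b j (h j) := by
  simp_rw [prod_sum_mul_eq_sum_prod_mul_prod, ← integral_mul_const]
  exact integral_finsetSum _ fun h _ => (hint h).mul_const _

end

theorem tucker_decomposition_general
    {Ω : Type*} [MeasurableSpace Ω] (μ : Measure Ω) [IsProbabilityMeasure μ]
    (k p : ℕ) (d : Fin p → ℕ)
    (x : Ω → Fin k → ℝ) (hx : Measurable x)
    -- `x` takes values in the probability simplex `Δ^{k-1}`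
    (hsimplex : ∀ ω, (∀ h, 0 ≤ x ω h) ∧ ∑ h, x ω h = 1)
    (y : (j : Fin p) → Ω → Fin (d j)) (hy : ∀ j, Measurable (y j))
    (φ : (j : Fin p) → Fin k → Fin (d j) → ℝ)
    -- conditional categorical distribution: `P(y_j = c ∣ σ(x)) = Σ_h x_h φ_{jhc}` a.s.
    (hcond : ∀ (j : Fin p) (c : Fin (d j)),
      μ[fun ω => if y j ω = c then (1 : ℝ) else 0 | (MeasurableSpace.comap x inferInstance)]
        =ᵐ[μ] fun ω => ∑ h, x ω h * φ j h c)
    -- mutual conditional independence of `y₁,…,y_p` given `σ(x)`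
    (hCI : ∀ f : (j : Fin p) → Fin (d j) → ℝ,
      μ[fun ω => ∏ j, f j (y j ω) | (MeasurableSpace.comap x inferInstance)]
        =ᵐ[μ] fun ω => ∏ j,
          ((μ[fun ω' => f j (y j ω') | (MeasurableSpace.comap x inferInstance)]) ω)) :
    ∀ c : (j : Fin p) → Fin (d j),
      (μ {ω | ∀ j, y j ω = c j}).toReal =
        ∑ h : Fin p → Fin k, (∫ ω, ∏ j, x ω (h j) ∂μ) * ∏ j, φ j (h j) (c j) := by
  intro c
  have hfactor : μ[fun ω => ∏ j, (if y j ω = c j then (1 : ℝ) else 0) |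
      MeasurableSpace.comap x inferInstance] =ᵐ[μ] fun ω => ∏ j, ∑ h, x ω h * φ j h (c j) := by
    filter_upwards [hCI fun j a => if a = c j then 1 else 0,
      ae_all_iff.2 fun j => hcond j (c j)] with ω hprod hmarg
    rw [hprod]
    exact prod_congr rfl fun j _ => hmarg j
  calc (μ {ω | ∀ j, y j ω = c j}).toReal
      = ∫ ω, ∏ j, (if y j ω = c j then (1 : ℝ) else 0) ∂μ :=
        measureReal_forall_eq_eq_integral_prod_ite hy c
    _ = ∫ ω, ∏ j, ∑ h, x ω h * φ j h (c j) ∂μ := by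
        rw [← integral_condExp hx.comap_le]
        exact integral_congr_ae hfactor
    _ = _ := integral_prod_sum_mul_eq_sum_integral_mul
        (integrable_prod_apply_of_mem_stdSimplex hx hsimplex) _

/-- Tucker decomposition of the joint probability tensor:
`P(y₁ = c₁, …, y_p = c_p) = Σ_{h₁,…,h_p} g_{h₁…h_p} ∏_j φ_{j h_j c_j}` with
`g_{h₁…h_p} = E[∏_j x_{h_j}]`. -/
theorem tucker_decomposition
    {Ω : Type*} [MeasurableSpace Ω] (μ : Measure Ω) [IsProbabilityMeasure μ]
    (k p : ℕ) (d : Fin p → ℕ)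
    (x : Ω → Fin k → ℝ) (hx : Measurable x)
    -- `x` takes values in the probability simplex `Δ^{k-1}`
    (hsimplex : ∀ ω, (∀ h, 0 ≤ x ω h) ∧ ∑ h, x ω h = 1)
    (y : (j : Fin p) → Ω → Fin (d j)) (hy : ∀ j, Measurable (y j))
    (φ : (j : Fin p) → Fin k → Fin (d j) → ℝ)
    -- each `φ_{jh·}` is a probability vector
    (hφ : ∀ j h, (∀ c, 0 ≤ φ j h c) ∧ ∑ c, φ j h c = 1)
    -- conditional categorical distribution: `P(y_j = c ∣ σ(x)) = Σ_h x_h φ_{jhc}` a.s.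
    (hcond : ∀ (j : Fin p) (c : Fin (d j)),
      μ[fun ω => if y j ω = c then (1 : ℝ) else 0 | (MeasurableSpace.comap x inferInstance)]
        =ᵐ[μ] fun ω => ∑ h, x ω h * φ j h c)
    -- mutual conditional independence of `y₁,…,y_p` given `σ(x)`
    (hCI : ∀ f : (j : Fin p) → Fin (d j) → ℝ,
      μ[fun ω => ∏ j, f j (y j ω) | (MeasurableSpace.comap x inferInstance)]
        =ᵐ[μ] fun ω => ∏ j,
          ((μ[fun ω' => f j (y j ω') | (MeasurableSpace.comap x inferInstance)]) ω)) :
    ∀ c : (j : Fin p) → Fin (d j),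
      (μ {ω | ∀ j, y j ω = c j}).toReal =
        ∑ h : Fin p → Fin k, (∫ ω, ∏ j, x ω (h j) ∂μ) * ∏ j, φ j (h j) (c j) :=
  tucker_decomposition_general μ k p d x hx hsimplex y hy φ hcond hCI
end

section
/- (Lemma 1, uniform convergence of the GMM objective.) Let Θ be a compact metric space, (Y, 𝒴) a measurable space, and f : Y × Θ → ℝ^ℓ such that f(y, ·) is continuous on Θ for every y ∈ Y, f(·, θ) is measurable for every θ ∈ Θ, and for a probability measure ν on Y, ∫ sup_{θ ∈ Θ} ‖f(y, θ)‖ dν(y) < ∞. Let y_1, y_2, … be an i.i.d. sequence with common law ν on a probability space (Ω, F, P), and set f_n(θ) = (1/n) Σ_{i=1}^n f(y_i, θ) and f_0(θ) = ∫ f(y, θ) dν(y). Let A_n be a sequence of random ℓ × ℓ positive semidefinite matrices converging in probability to a (deterministic) positive semidefinite matrix A. Define Q_n(θ) = f_n(θ)^T A_n f_n(θ) and Q_0(θ) = f_0(θ)^T A f_0(θ). Then sup_{θ ∈ Θ} |Q_n(θ) − Q_0(θ)| → 0 in probability. -/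
/-!
Regard `y ↦ f(y, ·)` as a random element of the separable Banach space `C(Θ, ℝ^ℓ)`: its norm is
the integrable envelope `sup_θ ‖f(y, θ)‖`, so it is Bochner integrable and the strong law of large
numbers in that space gives `f_n → f_0` uniformly on `Θ`, almost surely and hence in probability.
The objective `(B, g) ↦ (θ ↦ g(θ)ᵀ B g(θ))` is a continuous map into `C(Θ, ℝ)`, whose distance is
`sup_θ |Q_n(θ) - Q_0(θ)|`, so the continuous mapping theorem applied to `(A_n, f_n) → (A, f_0)`
concludes.
-/

open MeasureTheory Filter Topology

theorem Measurable.iSup_of_continuous {α X : Type*} [MeasurableSpace α] [TopologicalSpace X]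
    [TopologicalSpace.SeparableSpace X] {g : α → X → ℝ} (hc : ∀ a, Continuous (g a))
    (hm : ∀ x, Measurable fun a => g a x) : Measurable fun a => ⨆ x, g a x := by
  obtain ⟨S, hSc, hSd⟩ := TopologicalSpace.exists_countable_dense X
  have := hSc.to_subtype
  simp_rw [← hSd.ciSup' (hc _)]
  exact Measurable.iSup fun s => hm s

theorem measurable_of_measurable_dist {α β : Type*} [MeasurableSpace α] [PseudoMetricSpace β]
    [SecondCountableTopology β] [MeasurableSpace β] [BorelSpace β] {F : α → β}
    (h : ∀ b, Measurable fun a => dist (F a) b) : Measurable F := by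
  refine measurable_of_isOpen fun s hs => ?_
  obtain ⟨T, -, hTc, hT⟩ := TopologicalSpace.isOpen_biUnion_countable
    {p : β × ℝ | Metric.ball p.1 p.2 ⊆ s} (fun p => Metric.ball p.1 p.2)
    fun p _ => Metric.isOpen_ball
  have hs_eq : s = ⋃ p ∈ T, Metric.ball p.1 p.2 := by
    rw [hT]
    refine subset_antisymm (fun x hx => ?_) (Set.iUnion₂_subset fun p hp => hp)
    obtain ⟨r, hr, hrs⟩ := Metric.isOpen_iff.1 hs x hx
    exact Set.mem_biUnion (x := (x, r)) hrs (Metric.mem_ball_self hr)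
  rw [hs_eq, Set.preimage_iUnion₂]
  exact MeasurableSet.biUnion hTc fun p _ => measurableSet_lt (h p.1) measurable_const

theorem ContinuousMap.measurable_of_measurable_apply {α X E : Type*} [MeasurableSpace α]
    [PseudoMetricSpace X] [CompactSpace X] [PseudoMetricSpace E] [SecondCountableTopology E]
    [MeasurableSpace E] [BorelSpace E] [MeasurableSpace C(X, E)] [BorelSpace C(X, E)]
    {F : α → C(X, E)} (h : ∀ x, Measurable fun a => F a x) : Measurable F := by
  refine measurable_of_measurable_dist fun g => ?_
  simp_rw [ContinuousMap.dist_eq_iSup]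
  exact Measurable.iSup_of_continuous (fun a => by fun_prop) fun x => (h x).dist measurable_const

theorem ProbabilityTheory.iIndepFun.strong_law_ae_of_map {Y : Type*} [MeasurableSpace Y]
    {ν : Measure Y} {Ω : Type*} [MeasurableSpace Ω] {P : Measure Ω}
    {ys : ℕ → Ω → Y} (hys : ∀ i, Measurable (ys i)) (hiid : iIndepFun ys P)
    (hlaw : ∀ i, Measure.map (ys i) P = ν)
    {E : Type*} [NormedAddCommGroup E] [NormedSpace ℝ E] [CompleteSpace E] [MeasurableSpace E]
    [BorelSpace E] {h : Y → E} (hm : Measurable h) (hi : Integrable h ν) :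
    ∀ᵐ ω ∂P, Tendsto (fun n : ℕ => (n : ℝ)⁻¹ • ∑ m ∈ Finset.range n, h (ys m ω))
      atTop (𝓝 (∫ y, h y ∂ν)) := by
  have hi0 : Integrable h (P.map (ys 0)) := (hlaw 0).symm ▸ hi
  have hident : ∀ i, IdentDistrib (ys i) (ys 0) P P := fun i =>
    ⟨(hys i).aemeasurable, (hys 0).aemeasurable, by rw [hlaw i, hlaw 0]⟩
  have := strong_law_ae (fun i => h ∘ ys i)
    ((integrable_map_measure hi0.aestronglyMeasurable (hys 0).aemeasurable).mp hi0)
    (fun i j hij => (hiid.indepFun hij).comp hm hm) (fun i => (hident i).comp hm)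
  rwa [Function.comp_def, ← integral_map (hys 0).aemeasurable hi0.aestronglyMeasurable,
    hlaw 0] at this

namespace MeasureTheory

variable {α ι : Type*} {m : MeasurableSpace α} {μ : Measure α} {l : Filter ι}

theorem tendstoInMeasure_iff_dist_lt {E : Type*} [PseudoMetricSpace E] {f : ι → α → E}
    {g : α → E} : TendstoInMeasure μ f l g ↔
      ∀ ε > 0, Tendsto (fun i => μ {x | ε < dist (f i x) (g x)}) l (𝓝 0) := by
  rw [tendstoInMeasure_iff_dist]
  refine ⟨fun h ε hε => ?_, fun h ε hε => ?_⟩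
  · refine tendsto_of_tendsto_of_tendsto_of_le_of_le tendsto_const_nhds (h ε hε)
      (fun _ => zero_le) fun i => measure_mono fun x (hx : ε < _) => hx.le
  · refine tendsto_of_tendsto_of_tendsto_of_le_of_le tendsto_const_nhds (h (ε / 2) (half_pos hε))
      (fun _ => zero_le) fun i => measure_mono fun x (hx : ε ≤ _) => ?_
    show ε / 2 < _
    linarith

theorem TendstoInMeasure.prodMk {E F : Type*} [PseudoEMetricSpace E] [PseudoEMetricSpace F]
    {f : ι → α → E} {g : α → E} {f' : ι → α → F} {g' : α → F}
    (h : TendstoInMeasure μ f l g) (h' : TendstoInMeasure μ f' l g') :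
    TendstoInMeasure μ (fun i x => (f i x, f' i x)) l (fun x => (g x, g' x)) := by
  intro ε hε
  refine tendsto_of_tendsto_of_tendsto_of_le_of_le tendsto_const_nhds
    (by simpa using (h ε hε).add (h' ε hε)) (fun _ => zero_le) fun i => ?_
  refine (measure_mono fun x hx => ?_).trans (measure_union_le _ _)
  simpa [Prod.edist_eq, le_max_iff] using hx

theorem tendstoInMeasure_pi {κ : Type*} [Fintype κ] {E : κ → Type*}
    [∀ k, PseudoEMetricSpace (E k)] {f : ι → α → ∀ k, E k} {g : α → ∀ k, E k}
    (h : ∀ k, TendstoInMeasure μ (fun i x => f i x k) l (fun x => g x k)) :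
    TendstoInMeasure μ f l g := by
  intro ε hε
  refine tendsto_of_tendsto_of_tendsto_of_le_of_le tendsto_const_nhds
    (by simpa using tendsto_finsetSum Finset.univ fun k _ => h k ε hε) (fun _ => zero_le)
    fun i => ?_
  refine (measure_mono fun x (hx : ε ≤ _) => ?_).trans (measure_iUnion_fintype_le _ _)
  rw [edist_pi_def] at hx
  obtain ⟨k, -, hk⟩ := (Finset.le_sup_iff hε).1 hx
  exact Set.mem_iUnion.2 ⟨k, hk⟩

theorem TendstoInMeasure.comp_continuousAt {E F : Type*} [PseudoEMetricSpace E]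
    [PseudoEMetricSpace F] {f : ι → α → E} {c : E} (h : TendstoInMeasure μ f l fun _ => c)
    {φ : E → F} (hφ : ContinuousAt φ c) :
    TendstoInMeasure μ (fun i x => φ (f i x)) l fun _ => φ c := by
  intro ε hε
  obtain ⟨δ, hδ, hφδ⟩ := EMetric.continuousAt_iff.1 hφ ε hε
  refine tendsto_of_tendsto_of_tendsto_of_le_of_le tendsto_const_nhds (h δ hδ)
    (fun _ => zero_le) fun i => measure_mono fun x (hx : ε ≤ _) => ?_
  show δ ≤ _
  by_contra! hlt
  exact (hφδ hlt).not_ge hx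

end MeasureTheory

/-- The GMM objective `θ ↦ g(θ)ᵀ B g(θ)` as a continuous function of the weight `B` and the
moment function `g`. -/
def gmmObjective (Θ ι : Type*) [TopologicalSpace Θ] [LocallyCompactSpace Θ] [Fintype ι] :
    C((ι → ι → ℝ) × C(Θ, EuclideanSpace ℝ ι), C(Θ, ℝ)) :=
  ContinuousMap.curry ⟨fun p => ∑ i, ∑ j, p.1.2 p.2 i * p.1.1 i j * p.1.2 p.2 j, by fun_prop⟩

theorem gmm_uniform_convergence_general
    {Θ : Type*} [MetricSpace Θ] [CompactSpace Θ]
    {Y : Type*} [MeasurableSpace Y]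
    (ℓ : ℕ) (f : Y → Θ → EuclideanSpace ℝ (Fin ℓ))
    (hfc : ∀ y, Continuous (f y))
    (hfm : ∀ θ, Measurable fun y => f y θ)
    (ν : Measure Y)
    (hint : Integrable (fun y => ⨆ θ : Θ, ‖f y θ‖) ν)
    {Ω : Type*} [MeasurableSpace Ω] (P : Measure Ω) [IsProbabilityMeasure P]
    (ys : ℕ → Ω → Y) (hys : ∀ i, Measurable (ys i))
    (hiid : ProbabilityTheory.iIndepFun ys P)
    (hlaw : ∀ i, Measure.map (ys i) P = ν)
    (A : ℕ → Ω → Matrix (Fin ℓ) (Fin ℓ) ℝ)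
    (A0 : Matrix (Fin ℓ) (Fin ℓ) ℝ)
    (hAconv : ∀ i j, ∀ ε > 0,
      Tendsto (fun n => P {ω | ε < |A n ω i j - A0 i j|}) atTop (𝓝 0)) :
    ∀ ε > 0,
      Tendsto (fun (n : ℕ) => P {ω | ε <
          ⨆ θ : Θ,
            |(∑ i, ∑ j,
                ((n : ℝ)⁻¹ • ∑ m ∈ Finset.range n, f (ys m ω) θ) i * A n ω i j *
                  ((n : ℝ)⁻¹ • ∑ m ∈ Finset.range n, f (ys m ω) θ) j) -
              (∑ i, ∑ j,
                (∫ y, f y θ ∂ν) i * A0 i j * (∫ y, f y θ ∂ν) j)|})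
        atTop (𝓝 0) := by
  borelize C(Θ, EuclideanSpace ℝ (Fin ℓ))
  let F : Y → C(Θ, EuclideanSpace ℝ (Fin ℓ)) := fun y => ⟨f y, hfc y⟩
  have hFm : Measurable F := ContinuousMap.measurable_of_measurable_apply hfm
  have hFi : Integrable F ν := (integrable_norm_iff hFm.aestronglyMeasurable).1 <| by
    simpa only [ContinuousMap.norm_eq_iSup_norm, F, ContinuousMap.coe_mk] using hint
  let G : ℕ → Ω → C(Θ, EuclideanSpace ℝ (Fin ℓ)) := fun n ω =>
    (n : ℝ)⁻¹ • ∑ m ∈ Finset.range n, F (ys m ω)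
  have hG : TendstoInMeasure P G atTop fun _ => ∫ y, F y ∂ν :=
    tendstoInMeasure_of_tendsto_ae (fun n => by fun_prop)
      (hiid.strong_law_ae_of_map hys hlaw hFm hFi)
  have hA : TendstoInMeasure P (fun n ω i j => A n ω i j) atTop fun _ i j => A0 i j :=
    tendstoInMeasure_pi fun i => tendstoInMeasure_pi fun j =>
      tendstoInMeasure_iff_dist_lt.2 (by simpa only [Real.dist_eq] using hAconv i j)
  have hQ := (hA.prodMk hG).comp_continuousAt (gmmObjective Θ (Fin ℓ)).continuous.continuousAt
  intro ε hε
  convert tendstoInMeasure_iff_dist_lt.1 hQ ε hε using 4 with n ω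
  simp [ContinuousMap.dist_eq_iSup, gmmObjective, ContinuousMap.integral_apply hFi, G, F,
    Real.dist_eq]

/-- Lemma 1: uniform convergence in probability of the GMM objective
`Q_n(θ) = f_n(θ)ᵀ A_n f_n(θ)` to `Q_0(θ) = f_0(θ)ᵀ A f_0(θ)`. -/
theorem gmm_uniform_convergence
    {Θ : Type*} [MetricSpace Θ] [CompactSpace Θ]
    {Y : Type*} [MeasurableSpace Y]
    (ℓ : ℕ) (f : Y → Θ → EuclideanSpace ℝ (Fin ℓ))
    (hfc : ∀ y, Continuous (f y))
    (hfm : ∀ θ, Measurable fun y => f y θ)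
    (ν : Measure Y) [IsProbabilityMeasure ν]
    (hint : Integrable (fun y => ⨆ θ : Θ, ‖f y θ‖) ν)
    {Ω : Type*} [MeasurableSpace Ω] (P : Measure Ω) [IsProbabilityMeasure P]
    (ys : ℕ → Ω → Y) (hys : ∀ i, Measurable (ys i))
    (hiid : ProbabilityTheory.iIndepFun ys P)
    (hlaw : ∀ i, Measure.map (ys i) P = ν)
    (A : ℕ → Ω → Matrix (Fin ℓ) (Fin ℓ) ℝ) (hApsd : ∀ n ω, (A n ω).PosSemidef)
    (A0 : Matrix (Fin ℓ) (Fin ℓ) ℝ) (hA0psd : A0.PosSemidef)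
    (hAconv : ∀ i j, ∀ ε > 0,
      Tendsto (fun n => P {ω | ε < |A n ω i j - A0 i j|}) atTop (𝓝 0)) :
    ∀ ε > 0,
      Tendsto (fun (n : ℕ) => P {ω | ε <
          ⨆ θ : Θ,
            |(∑ i, ∑ j,
                ((n : ℝ)⁻¹ • ∑ m ∈ Finset.range n, f (ys m ω) θ) i * A n ω i j *
                  ((n : ℝ)⁻¹ • ∑ m ∈ Finset.range n, f (ys m ω) θ) j) -
              (∑ i, ∑ j,
                (∫ y, f y θ ∂ν) i * A0 i j * (∫ y, f y θ ∂ν) j)|})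
        atTop (𝓝 0) :=
  gmm_uniform_convergence_general ℓ f hfc hfm ν hint P ys hys hiid hlaw A A0 hAconv
end

section
/- (Coordinate update rule for Q^(3) is the unique minimizer, Equation (updatePhiM3).) Fix finite index sets I and J ⊆ I × I, real numbers λ₂ and λ₃ not both zero, and: for each t ∈ I a matrix Ē²_t ∈ ℝ^{d × d_t} and a vector ψ_t ∈ ℝ^{d_t}; for each (s,t) ∈ J a three-way array Ē³_{st} : {1,…,d} × {1,…,d_s} × {1,…,d_t} → ℝ. Define q : ℝ^d → ℝ by q(φ) = λ₂-term plus λ₃-term: q(φ) = Σ_{t ∈ I} ‖Ē²_t − λ₂ φ ψ_t^T‖_F² + Σ_{(s,t) ∈ J} Σ_{a,b,c} (Ē³_{st}(a,b,c) − λ₃ φ_a (ψ_s)_b (ψ_t)_c)². Assume the denominator D = λ₂² Σ_{t ∈ I} ψ_t^T ψ_t + λ₃² Σ_{(s,t) ∈ J} (ψ_s^T ψ_s)(ψ_t^T ψ_t) is strictly positive. Then q attains a unique global minimum at φ* whose a-th coordinate is φ*_a = ( λ₂ Σ_{t ∈ I} (Ē²_t ψ_t)_a + λ₃ Σ_{(s,t)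 ∈ J} Σ_{b,c} Ē³_{st}(a,b,c) (ψ_s)_b (ψ_t)_c ) / D. -/
/-!
For a fixed coordinate `a`, every residual of `q` is affine in the single scalar `φ a`, so
`q φ = ∑ a, (C a - 2 φ_a N a + φ_a² D)`, where `N a` and `D` are the numerator and denominator
of the update rule. As `φ* = N / D`, completing the square gives `q φ - q φ* = D ∑ a, (φ_a - φ*_a)²`,
which is positive for `φ ≠ φ*` because `D > 0`.
-/

open Finset

theorem sum_quadratic_lt_of_ne {n : Type*} [Fintype n] {D : ℝ} (hD : 0 < D)
    (C N φ₀ φ : n → ℝ) (hN : ∀ a, N a = D * φ₀ a) (hφ : φ ≠ φ₀) :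
    ∑ a, (C a - 2 * φ₀ a * N a + φ₀ a ^ 2 * D) < ∑ a, (C a - 2 * φ a * N a + φ a ^ 2 * D) := by
  have hdiff : ∑ a, (C a - 2 * φ a * N a + φ a ^ 2 * D) -
      ∑ a, (C a - 2 * φ₀ a * N a + φ₀ a ^ 2 * D) = D * ∑ a, (φ a - φ₀ a) ^ 2 := by
    rw [← sum_sub_distrib, mul_sum]
    exact sum_congr rfl fun a _ => by rw [hN]; ring
  have hpos : 0 < ∑ a, (φ a - φ₀ a) ^ 2 := by
    obtain ⟨a, ha⟩ := Function.ne_iff.mp hφ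
    have : φ a - φ₀ a ≠ 0 := sub_ne_zero.mpr ha
    exact sum_pos' (fun _ _ => sq_nonneg _) ⟨a, mem_univ a, by positivity⟩
  linarith [mul_pos hD hpos]

namespace Q3

variable {ι : Type*} [Fintype ι] {d : ℕ} {dt : ι → ℕ} (lam2 lam3 : ℝ)
  (E2 : (t : ι) → Matrix (Fin d) (Fin (dt t)) ℝ) (ψ : (t : ι) → Fin (dt t) → ℝ)
  (J : Finset (ι × ι)) (E3 : (s t : ι) → Fin d → Fin (dt s) → Fin (dt t) → ℝ)

def denominator : ℝ :=
  lam2 ^ 2 * (∑ t : ι, ∑ b : Fin (dt t), ψ t b ^ 2) +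
    lam3 ^ 2 * ∑ p ∈ J, (∑ b : Fin (dt p.1), ψ p.1 b ^ 2) * (∑ c : Fin (dt p.2), ψ p.2 c ^ 2)

def numerator (a : Fin d) : ℝ :=
  lam2 * (∑ t : ι, ∑ b : Fin (dt t), E2 t a b * ψ t b) +
    lam3 * ∑ p ∈ J, ∑ b : Fin (dt p.1), ∑ c : Fin (dt p.2), E3 p.1 p.2 a b c * ψ p.1 b * ψ p.2 c

def dataSqNorm (a : Fin d) : ℝ :=
  (∑ t : ι, ∑ b : Fin (dt t), E2 t a b ^ 2) +
    ∑ p ∈ J, ∑ b : Fin (dt p.1), ∑ c : Fin (dt p.2), E3 p.1 p.2 a b c ^ 2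

theorem coordinate_objective_eq (a : Fin d) (x : ℝ) :
    (∑ t : ι, ∑ b : Fin (dt t), (E2 t a b - lam2 * x * ψ t b) ^ 2) +
        ∑ p ∈ J, ∑ b : Fin (dt p.1), ∑ c : Fin (dt p.2),
          (E3 p.1 p.2 a b c - lam3 * x * ψ p.1 b * ψ p.2 c) ^ 2 =
      dataSqNorm E2 J E3 a - 2 * x * numerator lam2 lam3 E2 ψ J E3 a +
        x ^ 2 * denominator lam2 lam3 ψ J := by
  have h2 : ∑ t : ι, ∑ b : Fin (dt t), (E2 t a b - lam2 * x * ψ t b) ^ 2 =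
      ∑ t : ι, ∑ b : Fin (dt t), E2 t a b ^ 2 -
        2 * x * (lam2 * ∑ t : ι, ∑ b : Fin (dt t), E2 t a b * ψ t b) +
        x ^ 2 * (lam2 ^ 2 * ∑ t : ι, ∑ b : Fin (dt t), ψ t b ^ 2) := by
    simp only [mul_sum, ← sum_sub_distrib, ← sum_add_distrib]
    refine sum_congr rfl fun t _ => sum_congr rfl fun b _ => ?_
    ring
  have h3 : ∑ p ∈ J, ∑ b : Fin (dt p.1), ∑ c : Fin (dt p.2),
        (E3 p.1 p.2 a b c - lam3 * x * ψ p.1 b * ψ p.2 c) ^ 2 =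
      ∑ p ∈ J, ∑ b : Fin (dt p.1), ∑ c : Fin (dt p.2), E3 p.1 p.2 a b c ^ 2 -
        2 * x * (lam3 * ∑ p ∈ J, ∑ b : Fin (dt p.1), ∑ c : Fin (dt p.2),
          E3 p.1 p.2 a b c * ψ p.1 b * ψ p.2 c) +
        x ^ 2 * (lam3 ^ 2 * ∑ p ∈ J,
          (∑ b : Fin (dt p.1), ψ p.1 b ^ 2) * (∑ c : Fin (dt p.2), ψ p.2 c ^ 2)) := by
    simp_rw [sum_mul_sum]
    simp only [mul_sum, ← sum_sub_distrib, ← sum_add_distrib]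
    refine sum_congr rfl fun p _ => sum_congr rfl fun b _ => sum_congr rfl fun c _ => ?_
    ring
  rw [h2, h3, dataSqNorm, numerator, denominator]
  ring

theorem objective_eq (φ : Fin d → ℝ) :
    (∑ t : ι, ∑ a : Fin d, ∑ b : Fin (dt t), (E2 t a b - lam2 * φ a * ψ t b) ^ 2) +
        ∑ p ∈ J, ∑ a : Fin d, ∑ b : Fin (dt p.1), ∑ c : Fin (dt p.2),
          (E3 p.1 p.2 a b c - lam3 * φ a * ψ p.1 b * ψ p.2 c) ^ 2 =
      ∑ a, (dataSqNorm E2 J E3 a - 2 * φ a * numerator lam2 lam3 E2 ψ J E3 a +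
        φ a ^ 2 * denominator lam2 lam3 ψ J) := by
  rw [sum_comm, sum_comm (s := J), ← sum_add_distrib]
  exact sum_congr rfl fun a _ => coordinate_objective_eq lam2 lam3 E2 ψ J E3 a (φ a)

end Q3

theorem q3_update_unique_minimizer_general
    {ι : Type*} [Fintype ι] (d : ℕ) (dt : ι → ℕ)
    (lam2 lam3 : ℝ)
    (E2 : (t : ι) → Matrix (Fin d) (Fin (dt t)) ℝ)
    (ψ : (t : ι) → Fin (dt t) → ℝ)
    (J : Finset (ι × ι))
    (E3 : (s t : ι) → Fin d → Fin (dt s) → Fin (dt t) → ℝ)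
    (hD : 0 < lam2 ^ 2 * (∑ t : ι, ∑ b : Fin (dt t), ψ t b ^ 2) +
        lam3 ^ 2 * ∑ p ∈ J, (∑ b : Fin (dt p.1), ψ p.1 b ^ 2) *
          (∑ c : Fin (dt p.2), ψ p.2 c ^ 2))
    (q : (Fin d → ℝ) → ℝ)
    (hq : ∀ φ, q φ =
      (∑ t : ι, ∑ a : Fin d, ∑ b : Fin (dt t), (E2 t a b - lam2 * φ a * ψ t b) ^ 2) +
        ∑ p ∈ J, ∑ a : Fin d, ∑ b : Fin (dt p.1), ∑ c : Fin (dt p.2),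
          (E3 p.1 p.2 a b c - lam3 * φ a * ψ p.1 b * ψ p.2 c) ^ 2)
    (φstar : Fin d → ℝ)
    (hφstar : ∀ a, φstar a =
      (lam2 * (∑ t : ι, ∑ b : Fin (dt t), E2 t a b * ψ t b) +
          lam3 * ∑ p ∈ J, ∑ b : Fin (dt p.1), ∑ c : Fin (dt p.2),
            E3 p.1 p.2 a b c * ψ p.1 b * ψ p.2 c) /
        (lam2 ^ 2 * (∑ t : ι, ∑ b : Fin (dt t), ψ t b ^ 2) +
          lam3 ^ 2 * ∑ p ∈ J, (∑ b : Fin (dt p.1), ψ p.1 b ^ 2) *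
            (∑ c : Fin (dt p.2), ψ p.2 c ^ 2))) :
    ∀ φ : Fin d → ℝ, φ ≠ φstar → q φstar < q φ := by
  intro φ hφ
  have hN : ∀ a, Q3.numerator lam2 lam3 E2 ψ J E3 a = Q3.denominator lam2 lam3 ψ J * φstar a :=
    fun a => by rw [hφstar a]; exact (mul_div_cancel₀ _ hD.ne').symm
  rw [hq, hq, Q3.objective_eq, Q3.objective_eq]
  exact sum_quadratic_lt_of_ne hD _ _ _ _ hN hφ

/-- Coordinate update rule for `Q⁽³⁾` is the unique global minimizer (Equation (updatePhiM3)). -/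
theorem q3_update_unique_minimizer
    {ι : Type*} [Fintype ι] (d : ℕ) (dt : ι → ℕ)
    (lam2 lam3 : ℝ) (hlam : lam2 ≠ 0 ∨ lam3 ≠ 0)
    (E2 : (t : ι) → Matrix (Fin d) (Fin (dt t)) ℝ)
    (ψ : (t : ι) → Fin (dt t) → ℝ)
    (J : Finset (ι × ι))
    (E3 : (s t : ι) → Fin d → Fin (dt s) → Fin (dt t) → ℝ)
    (hD : 0 < lam2 ^ 2 * (∑ t : ι, ∑ b : Fin (dt t), ψ t b ^ 2) +
        lam3 ^ 2 * ∑ p ∈ J, (∑ b : Fin (dt p.1), ψ p.1 b ^ 2) *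
          (∑ c : Fin (dt p.2), ψ p.2 c ^ 2))
    (q : (Fin d → ℝ) → ℝ)
    (hq : ∀ φ, q φ =
      (∑ t : ι, ∑ a : Fin d, ∑ b : Fin (dt t), (E2 t a b - lam2 * φ a * ψ t b) ^ 2) +
        ∑ p ∈ J, ∑ a : Fin d, ∑ b : Fin (dt p.1), ∑ c : Fin (dt p.2),
          (E3 p.1 p.2 a b c - lam3 * φ a * ψ p.1 b * ψ p.2 c) ^ 2)
    (φstar : Fin d → ℝ)
    (hφstar : ∀ a, φstar a =
      (lam2 * (∑ t : ι, ∑ b : Fin (dt t), E2 t a b * ψ t b) +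
          lam3 * ∑ p ∈ J, ∑ b : Fin (dt p.1), ∑ c : Fin (dt p.2),
            E3 p.1 p.2 a b c * ψ p.1 b * ψ p.2 c) /
        (lam2 ^ 2 * (∑ t : ι, ∑ b : Fin (dt t), ψ t b ^ 2) +
          lam3 ^ 2 * ∑ p ∈ J, (∑ b : Fin (dt p.1), ψ p.1 b ^ 2) *
            (∑ c : Fin (dt p.2), ψ p.2 c ^ 2))) :
    ∀ φ : Fin d → ℝ, φ ≠ φstar → q φstar < q φ :=
  q3_update_unique_minimizer_general d dt lam2 lam3 E2 ψ J E3 hD q hq φstar hφstar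
end
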